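/- Let q = 2^n and let f ∈ F_q[x] be any polynomial. Then in F_q[x,y,z] the polynomial y + z divides the partial derivative ∂φ_f/∂x, and y + z divides ∂φ_f/∂y + ∂φ_f/∂z; equivalently, at every point with y = z one has φ_f'_x = 0 and φ_f'_y = φ_f'_z. -/

import Mathlib

/-!
Everything happens in characteristic 2. Apply `D = ∂ₓ` or `D = ∂_y + ∂_z` to
`(x+y)(x+z)(y+z) φ = f(x) + f(y) + f(z) + f(x+y+z)`. Both derivations send `(x+y)(x+z)(y+z)` to
`(y+z)²`, and send the right-hand side to `f'(a) + f'(b)` with `a + b = y + z`, which is divisible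
by `(a+b)²` because `f'' = 0` in characteristic 2. Hence `(y+z)²` divides
`(x+y)(x+z)(y+z) · Dφ`, and since `y + z` is prime and does not divide `(x+y)(x+z)`, it divides `Dφ`.
-/

open MvPolynomial

/-- The polynomial `(x+y)(x+z)(y+z)` in `F[x,y,z]`. -/
noncomputable def e3 (F : Type*) [CommRing F] : MvPolynomial (Fin 3) F :=
  (X 0 + X 1) * (X 0 + X 2) * (X 1 + X 2)

/-- The polynomial `f(x) + f(y) + f(z) + f(x+y+z)` in `F[x,y,z]`. -/
noncomputable def fsum {F : Type*} [CommRing F] (f : Polynomial F) :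
    MvPolynomial (Fin 3) F :=
  Polynomial.aeval (X 0 : MvPolynomial (Fin 3) F) f +
    Polynomial.aeval (X 1 : MvPolynomial (Fin 3) F) f +
    Polynomial.aeval (X 2 : MvPolynomial (Fin 3) F) f +
    Polynomial.aeval (X 0 + X 1 + X 2 : MvPolynomial (Fin 3) F) f

namespace Polynomial

theorem derivative_derivative_eq_zero_of_charTwo {R : Type*} [CommRing R] [CharP R 2]
    (f : R[X]) : derivative (derivative f) = 0 := by
  ext m
  have hcast : ((m : R) + 1) * ((m : R) + 1 + 1) = 0 := by
    exact_mod_cast (CharP.cast_eq_zero_iff R 2 _).mpr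
      (even_iff_two_dvd.mp (Nat.even_mul_succ_self (m + 1)))
  rw [coeff_derivative, coeff_derivative, coeff_zero, mul_assoc]
  push_cast
  rw [mul_comm _ ((m : R) + 1), hcast, mul_zero]

theorem sq_add_dvd_aeval_derivative_add {F R : Type*} [CommSemiring F] [CommRing R]
    [Algebra F R] [CharP R 2] (f : F[X]) (a b : R) :
    (a + b) ^ 2 ∣ aeval a (derivative f) + aeval b (derivative f) := by
  -- second-order Taylor expansion of `f'` at `a`, whose linear term is `f''(a) = 0`
  obtain ⟨k, hk⟩ := binomExpansion (derivative (f.map (algebraMap F R))) a (a + b)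
  have hb : a + (a + b) = b := by linear_combination a * CharTwo.two_eq_zero (R := R)
  rw [hb, derivative_derivative_eq_zero_of_charTwo, eval_zero, zero_mul, add_zero,
    derivative_map, eval_map_algebraMap, eval_map_algebraMap] at hk
  exact ⟨k, by linear_combination hk + aeval a (derivative f) * CharTwo.two_eq_zero (R := R)⟩

end Polynomial

theorem MvPolynomial.prime_X_add_X {σ R : Type*} [CommRing R] [IsDomain R] [DecidableEq σ]
    {i j : σ} (hij : i ≠ j) : Prime (X i + X j : MvPolynomial σ R) := by
  let e : MvPolynomial σ R ≃ₐ[R] MvPolynomial σ R :=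
    AlgEquiv.ofAlgHom (aeval (Function.update X i (X i + X j)))
      (aeval (Function.update X i (X i - X j)))
      (by ext k; by_cases hk : k = i <;> simp [hk, hij.symm])
      (by ext k; by_cases hk : k = i <;> simp [hk, hij.symm])
  have he : e (X i) = X i + X j := by simp [e]
  rw [← he, MulEquiv.prime_iff]
  exact X_prime

theorem Derivation.dvd_apply_of_mul_eq {A R : Type*} [CommSemiring A] [CommRing R] [IsDomain R]
    [Algebra A R] (D : Derivation A R R) {w p φ s : R} (hw : Prime w) (hp : ¬ w ∣ p)
    (hD : w ^ 2 ∣ D (p * w)) (hs : w ^ 2 ∣ D s) (h : p * w * φ = s) : w ∣ D φ := by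
  have hleib : p * w * D φ = D s - φ * D (p * w) := by
    rw [← h, D.leibniz, smul_eq_mul, smul_eq_mul]
    ring
  have hdvd : w * w ∣ w * (p * D φ) := by
    rw [← sq, ← mul_assoc, mul_comm w p, hleib]
    exact dvd_sub hs (dvd_mul_of_dvd_right hD φ)
  exact (hw.dvd_or_dvd ((mul_dvd_mul_iff_left hw.ne_zero).mp hdvd)).resolve_left hp

section CharTwo

variable {F : Type*} [CommRing F] [CharP F 2]

theorem pderiv_zero_e3 : pderiv 0 (e3 F) = (X 1 + X 2) ^ 2 := by
  simp only [e3, Derivation.leibniz, map_add, pderiv_X_self, pderiv_X_of_ne, ne_eq,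
    Fin.reduceEq, not_false_eq_true, smul_eq_mul]
  linear_combination (X 0 * (X 1 + X 2) : MvPolynomial (Fin 3) F) *
    CharTwo.two_eq_zero (R := MvPolynomial (Fin 3) F)

theorem pderiv_one_add_pderiv_two_e3 :
    pderiv 1 (e3 F) + pderiv 2 (e3 F) = (X 1 + X 2) ^ 2 := by
  simp only [e3, Derivation.leibniz, map_add, pderiv_X_self, pderiv_X_of_ne, ne_eq,
    Fin.reduceEq, not_false_eq_true, smul_eq_mul]
  linear_combination (X 0 ^ 2 + 2 * X 0 * X 1 + 2 * X 0 * X 2 + X 1 * X 2 :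
    MvPolynomial (Fin 3) F) * CharTwo.two_eq_zero (R := MvPolynomial (Fin 3) F)

theorem sq_dvd_pderiv_zero_fsum (f : Polynomial F) : (X 1 + X 2) ^ 2 ∣ pderiv 0 (fsum f) := by
  have hsum : X 0 + (X 0 + X 1 + X 2) = (X 1 + X 2 : MvPolynomial (Fin 3) F) := by
    linear_combination (X 0 : MvPolynomial (Fin 3) F) *
      CharTwo.two_eq_zero (R := MvPolynomial (Fin 3) F)
  have key := Polynomial.sq_add_dvd_aeval_derivative_add f (X 0 : MvPolynomial (Fin 3) F)
    (X 0 + X 1 + X 2)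
  rw [hsum] at key
  simp only [fsum, map_add, Derivation.map_aeval, pderiv_X_self, pderiv_X_of_ne, ne_eq,
    Fin.reduceEq, not_false_eq_true, smul_eq_mul, mul_one, mul_zero, add_zero]
  exact key

theorem sq_dvd_pderiv_one_add_pderiv_two_fsum (f : Polynomial F) :
    (X 1 + X 2) ^ 2 ∣ pderiv 1 (fsum f) + pderiv 2 (fsum f) := by
  have key := Polynomial.sq_add_dvd_aeval_derivative_add f (X 1 : MvPolynomial (Fin 3) F) (X 2)
  simp only [fsum, map_add, Derivation.map_aeval, pderiv_X_self, pderiv_X_of_ne, ne_eq,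
    Fin.reduceEq, not_false_eq_true, smul_eq_mul, mul_one, mul_zero, add_zero, zero_add]
  convert key using 1
  linear_combination Polynomial.aeval (X 0 + X 1 + X 2) (Polynomial.derivative f) *
    CharTwo.two_eq_zero (R := MvPolynomial (Fin 3) F)

end CharTwo

theorem y_add_z_dvd_partial_derivatives_of_phi_general
    (n : ℕ) (F : Type*) [Field F] [Fintype F]
    (hF : Fintype.card F = 2 ^ n) (f : Polynomial F)
    (φ : MvPolynomial (Fin 3) F) (hφ : e3 F * φ = fsum f) :
    (X 1 + X 2 : MvPolynomial (Fin 3) F) ∣ MvPolynomial.pderiv 0 φ ∧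
      (X 1 + X 2 : MvPolynomial (Fin 3) F) ∣
        (MvPolynomial.pderiv 1 φ + MvPolynomial.pderiv 2 φ) := by
  have : CharP F 2 := charP_of_card_eq_prime_pow hF
  have hw : Prime (X 1 + X 2 : MvPolynomial (Fin 3) F) := prime_X_add_X (by decide)
  have hp : ¬ (X 1 + X 2 : MvPolynomial (Fin 3) F) ∣ (X 0 + X 1) * (X 0 + X 2) := fun h ↦ by
    simpa using map_dvd (eval ![(1 : F), 0, 0]) h
  exact ⟨(pderiv 0).dvd_apply_of_mul_eq hw hp (dvd_of_eq pderiv_zero_e3.symm)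
      (sq_dvd_pderiv_zero_fsum f) hφ,
    (pderiv 1 + pderiv 2 : Derivation F _ _).dvd_apply_of_mul_eq hw hp
      (dvd_of_eq pderiv_one_add_pderiv_two_e3.symm) (sq_dvd_pderiv_one_add_pderiv_two_fsum f) hφ⟩

theorem y_add_z_dvd_partial_derivatives_of_phi
    (n : ℕ) (hn : 0 < n) (F : Type*) [Field F] [Fintype F]
    (hF : Fintype.card F = 2 ^ n) (f : Polynomial F)
    (φ : MvPolynomial (Fin 3) F) (hφ : e3 F * φ = fsum f) :
    (X 1 + X 2 : MvPolynomial (Fin 3) F) ∣ MvPolynomial.pderiv 0 φ ∧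
      (X 1 + X 2 : MvPolynomial (Fin 3) F) ∣
        (MvPolynomial.pderiv 1 φ + MvPolynomial.pderiv 2 φ) :=
  y_add_z_dvd_partial_derivatives_of_phi_general n F hF f φ hφ
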